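/- arXiv:1004.4196 — 2 statements merged into one kernel-verified Lean document; each statement's English description precedes it below -/
import Mathlib

section
/- Let G be a graph and (T,B) a tree decomposition of G. Let F be the set of all pairs {u,v} of vertices of G with {u,v} ∉ E(G) such that {u,v} ⊆ B(x) for some node x of T. Then the graph G' with V(G') = V(G) and E(G') = E(G) ∪ F is chordal. -/
/-!
The fill-in graph is the intersection graph of the subtrees `T_v = {x | v ∈ B x}`. Take a cycle
`v₀ v₁ v₂ …` of length at least four. If `v₀v₂` is not a chord, `T_{v₀}` and `T_{v₂}` are disjoint,
so some tree edge `xy` has `T_{v₀}` entirely on the side of `x` and `T_{v₂}` on the side of `y`.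
A subtree meeting both sides contains `x`; this holds for `T_{v₁}`, and for the first vertex `w`
after `v₂` on the cycle whose subtree leaves the side of `y`. Then `v₁w` is a chord.
-/

/-- A graph is chordal if every cycle of length at least four has a chord,
i.e. an edge of the graph joining two vertices of the cycle that are not
adjacent along the cycle. -/
def IsChordal {V : Type*} (G : SimpleGraph V) : Prop :=
  ∀ ⦃v : V⦄ (c : G.Walk v v), c.IsCycle → 4 ≤ c.length →
    ∃ u w, u ∈ c.support ∧ w ∈ c.support ∧ G.Adj u w ∧ ¬ c.toSubgraph.Adj u w

/-- A tree decomposition of a graph `G`: a tree `T` with bags `B` satisfying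
vertex coverage, edge coverage and coherence. -/
structure TreeDecomp {V W : Type*} (G : SimpleGraph V) (T : SimpleGraph W)
    (B : W → Set V) : Prop where
  tree : T.IsTree
  vertexCover : ∀ v, ∃ x, v ∈ B x
  edgeCover : ∀ ⦃u v⦄, G.Adj u v → ∃ x, u ∈ B x ∧ v ∈ B x
  coherent : ∀ v, (T.induce {x | v ∈ B x}).Connected

namespace SimpleGraph.Walk

variable {V : Type*} {G : SimpleGraph V} {u v₁ v₂ : V} {h₀₁ : G.Adj u v₁} {h₁₂ : G.Adj v₁ v₂}
  {p : G.Walk v₂ u}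

lemma IsCycle.ne_and_not_toSubgraph_adj_of_four_le (hc : (cons h₀₁ (cons h₁₂ p)).IsCycle)
    (hlen : 4 ≤ (cons h₀₁ (cons h₁₂ p)).length) :
    v₂ ≠ u ∧ ¬ (cons h₀₁ (cons h₁₂ p)).toSubgraph.Adj u v₂ := by
  set c := cons h₀₁ (cons h₁₂ p)
  have hv₂ : c.getVert 2 = v₂ := by simp [c]
  rw [← hv₂, Ne, hc.getVert_endpoint_iff (by omega)]
  refine ⟨by omega, ?_⟩
  change c.getVert 2 ∉ c.toSubgraph.neighborSet u
  rw [hc.neighborSet_toSubgraph_endpoint, snd, penultimate]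
  rintro (h | h) <;>
    have := hc.getVert_injOn ⟨by omega, by omega⟩ ⟨by omega, by omega⟩ h <;> omega

lemma IsCycle.not_toSubgraph_adj_snd (hc : (cons h₀₁ (cons h₁₂ p)).IsCycle) {w : V}
    (hw : w ∈ p.support) (hw₀ : w ≠ u) (hw₂ : w ≠ v₂) :
    w ≠ v₁ ∧ ¬ (cons h₀₁ (cons h₁₂ p)).toSubgraph.Adj v₁ w := by
  have hv₁ : v₁ ∉ p.support := ((cons_isPath_iff _ _).mp ((cons_isCycle_iff _ _).mp hc).1).2
  refine ⟨fun h => hv₁ (h ▸ hw), ?_⟩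
  simp only [Walk.toSubgraph, Subgraph.sup_adj, subgraphOfAdj_adj, Sym2.eq_iff]
  rintro ((⟨rfl, rfl⟩ | ⟨rfl, -⟩) | (⟨-, rfl⟩ | ⟨rfl, -⟩) | hp)
  · exact hw₀ rfl
  · exact hw₀ rfl
  · exact hw₂ rfl
  · exact hv₁ hw
  · exact hv₁ ((mem_verts_toSubgraph p).mp hp.fst_mem)

end SimpleGraph.Walk

namespace SimpleGraph

variable {V W : Type*}

def edgeSide (T : SimpleGraph W) (x y : W) : Set W :=
  {z | (T.deleteEdges {s(x, y)}).Reachable z y}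

variable {T : SimpleGraph W} {x y : W}

lemma IsAcyclic.notMem_edgeSide (hT : T.IsAcyclic) (hxy : T.Adj x y) : x ∉ T.edgeSide x y :=
  isBridge_iff.mp (isAcyclic_iff_forall_adj_isBridge.mp hT hxy)

lemma mem_edgeSide_of_adj_of_ne {a b : W} (hab : T.Adj a b) (hne : s(a, b) ≠ s(x, y))
    (hb : b ∈ T.edgeSide x y) : a ∈ T.edgeSide x y :=
  (deleteEdges_adj.mpr ⟨hab, hne⟩).reachable.trans hb

lemma Walk.mem_of_induce_crossing_edgeSide {S : Set W} {a b : S}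
    (p : (T.induce S).Walk a b) (ha : a.1 ∉ T.edgeSide x y) (hb : b.1 ∈ T.edgeSide x y) :
    x ∈ S ∧ y ∈ S := by
  induction p with
  | nil => exact absurd hb ha
  | @cons a c b hac p ih =>
    by_cases hc : c.1 ∈ T.edgeSide x y
    · by_cases he : s(a.1, c.1) = s(x, y)
      · rcases Sym2.eq_iff.mp he with ⟨rfl, rfl⟩ | ⟨rfl, -⟩
        · exact ⟨a.2, c.2⟩
        · exact absurd (Reachable.refl _) ha
      · exact absurd (mem_edgeSide_of_adj_of_ne (a := a.1) hac he hc) ha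
    · exact ih hc hb

lemma Connected.mem_of_induce_crossing_edgeSide {S : Set W} (hS : (T.induce S).Connected)
    {a b : W} (haS : a ∈ S) (ha : a ∉ T.edgeSide x y) (hbS : b ∈ S) (hb : b ∈ T.edgeSide x y) :
    x ∈ S ∧ y ∈ S :=
  (hS.preconnected ⟨a, haS⟩ ⟨b, hbS⟩).elim fun p => p.mem_of_induce_crossing_edgeSide ha hb

lemma Walk.exists_adj_mem_edgeSide {S : Set W} {a b : W} (p : T.Walk a b) (ha : a ∉ S)
    (hb : b ∈ S) : ∃ x ∈ S, ∃ y ∉ S, T.Adj x y ∧ a ∈ T.edgeSide x y := by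
  induction p with
  | nil => exact absurd hb ha
  | @cons a c b hac p ih =>
    by_cases hc : c ∈ S
    · exact ⟨c, hc, a, ha, hac.symm, Reachable.refl _⟩
    · obtain ⟨x, hx, y, hy, hxy, hcy⟩ := ih hc hb
      refine ⟨x, hx, y, hy, hxy, mem_edgeSide_of_adj_of_ne hac ?_ hcy⟩
      rintro he
      rcases Sym2.eq_iff.mp he with ⟨rfl, -⟩ | ⟨-, rfl⟩ <;> contradiction

lemma IsTree.exists_edgeSide_separating (hT : T.IsTree) {S₁ S₂ : Set W}
    (h₁ : (T.induce S₁).Connected) (h₂ : (T.induce S₂).Connected) (hdisj : Disjoint S₁ S₂) :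
    ∃ x y, T.Adj x y ∧ Disjoint S₁ (T.edgeSide x y) ∧ S₂ ⊆ T.edgeSide x y := by
  obtain ⟨a₁, ha₁⟩ := h₁.nonempty
  obtain ⟨a₂, ha₂⟩ := h₂.nonempty
  obtain ⟨p⟩ := hT.connected.preconnected a₂ a₁
  obtain ⟨x, hx, y, hy, hxy, ha₂y⟩ :=
    p.exists_adj_mem_edgeSide (hdisj.notMem_of_mem_right ha₂) ha₁
  refine ⟨x, y, hxy, Set.disjoint_left.mpr fun z hz hzy => ?_, fun z hz => ?_⟩
  · exact hy (h₁.mem_of_induce_crossing_edgeSide hx (hT.isAcyclic.notMem_edgeSide hxy)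
      hz hzy).2
  · by_contra hzy
    exact hdisj.notMem_of_mem_left hx (h₂.mem_of_induce_crossing_edgeSide hz hzy ha₂ ha₂y).1

def bagGraph (B : W → Set V) : SimpleGraph V :=
  fromRel fun u v => ∃ x, u ∈ B x ∧ v ∈ B x

lemma bagGraph_adj {B : W → Set V} {u v : V} :
    (bagGraph B).Adj u v ↔ u ≠ v ∧ ∃ x, u ∈ B x ∧ v ∈ B x := by
  refine and_congr_right fun _ => or_iff_left_of_imp ?_
  exact fun ⟨x, hv, hu⟩ => ⟨x, hu, hv⟩

theorem isChordal_bagGraph {B : W → Set V} (hT : T.IsTree)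
    (hB : ∀ v, (T.induce {x | v ∈ B x}).Connected) : IsChordal (bagGraph B) := by
  intro v₀ c hc hlen
  rcases c with _ | @⟨_, v₁, _, h₀₁, _ | @⟨_, v₂, _, h₁₂, p⟩⟩
  · simp at hlen
  · simp at hlen
  have mem_support : ∀ w ∈ p.support, w ∈ (Walk.cons h₀₁ (Walk.cons h₁₂ p)).support :=
    fun w hw => List.mem_cons_of_mem _ (List.mem_cons_of_mem _ hw)
  by_cases h₀₂ : Disjoint {x | v₀ ∈ B x} {x | v₂ ∈ B x}
  swap
  · obtain ⟨z, hz₀, hz₂⟩ := Set.not_disjoint_iff.mp h₀₂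
    obtain ⟨hv₂, hchord⟩ := hc.ne_and_not_toSubgraph_adj_of_four_le hlen
    exact ⟨v₀, v₂, Walk.start_mem_support _, mem_support _ p.start_mem_support,
      bagGraph_adj.mpr ⟨hv₂.symm, z, hz₀, hz₂⟩, hchord⟩
  obtain ⟨x, y, hxy, h₀, h₂⟩ := hT.exists_edgeSide_separating (hB v₀) (hB v₂) h₀₂
  obtain ⟨-, z₀₁, hz₀₁⟩ := bagGraph_adj.mp h₀₁
  obtain ⟨-, z₁₂, hz₁₂⟩ := bagGraph_adj.mp h₁₂
  have hx₁ : v₁ ∈ B x := ((hB v₁).mem_of_induce_crossing_edgeSide hz₀₁.2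
    (h₀.notMem_of_mem_left hz₀₁.1) hz₁₂.1 (h₂ hz₁₂.2)).1
  obtain ⟨d, hd, hd₁, hd₂⟩ := p.exists_boundary_dart {u | {x | u ∈ B x} ⊆ T.edgeSide x y} h₂
    fun h => h₀.notMem_of_mem_left hz₀₁.1 (h hz₀₁.1)
  obtain ⟨-, z, hz⟩ := bagGraph_adj.mp d.adj
  obtain ⟨z', hz', hz'y⟩ := Set.not_subset.mp hd₂
  have hxw : d.snd ∈ B x := ((hB d.snd).mem_of_induce_crossing_edgeSide hz' hz'y hz.2
    (hd₁ hz.1)).1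
  have hw₀ : d.snd ≠ v₀ := fun h => h₀.notMem_of_mem_right (hd₁ hz.1) (h ▸ hz.2)
  have hw₂ : d.snd ≠ v₂ := fun h => hT.isAcyclic.notMem_edgeSide hxy (h₂ (h ▸ hxw))
  obtain ⟨hw₁, hchord⟩ := hc.not_toSubgraph_adj_snd (p.dart_snd_mem_support_of_mem_darts hd)
    hw₀ hw₂
  exact ⟨v₁, d.snd, List.mem_cons_of_mem _ (Walk.start_mem_support _),
    mem_support _ (p.dart_snd_mem_support_of_mem_darts hd),
    bagGraph_adj.mpr ⟨hw₁.symm, x, hx₁, hxw⟩, hchord⟩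

end SimpleGraph

/-- Adding, for each bag, all missing edges between vertices of that bag
(the fill-in `F`) yields a chordal graph. -/
theorem chordal_fillin_of_treeDecomp {V W : Type*} (G : SimpleGraph V)
    (T : SimpleGraph W) (B : W → Set V) (td : TreeDecomp G T B) :
    IsChordal (G ⊔ SimpleGraph.fromRel (fun u v => ∃ x, u ∈ B x ∧ v ∈ B x)) := by
  have hG : G ≤ SimpleGraph.bagGraph B := fun u v huv =>
    SimpleGraph.bagGraph_adj.mpr ⟨huv.ne, td.edgeCover huv⟩
  change IsChordal (G ⊔ SimpleGraph.bagGraph B)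
  rw [sup_eq_right.mpr hG]
  exact SimpleGraph.isChordal_bagGraph td.tree td.coherent
end

section
/- Let (T,B) be a tree decomposition of a graph G, let {x,y} be an edge of T, and let {u1,v1},…,{um,vm} be edges of G with ui ∈ B(x) and vi ∈ B(y) for all i. Replace edge {x,y} by a path x, z1, …, zm, y with new nodes z1,…,zm and set B(zi) = (B(x) ∩ B(y)) ∪ {v1,…,vi, ui,…,um}. Then the resulting pair is again a tree decomposition of G, and every edge {ui,vi} is covered by the bag B(zi). -/
/-- The tree obtained from `T` by replacing the edge `{x,y}` by the path
`x, z_0, …, z_{m-1}, y`, where the subdivision nodes are the elements of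
`Fin m` (when `m = 0` the edge `{x,y}` is kept). -/
def subdividedTree {W : Type*} [DecidableEq W] (T : SimpleGraph W) (x y : W)
    (m : ℕ) : SimpleGraph (W ⊕ Fin m) :=
  SimpleGraph.fromRel (fun a b =>
    match a, b with
    | Sum.inl a, Sum.inl b => T.Adj a b ∧ (s(a, b) ≠ s(x, y) ∨ m = 0)
    | Sum.inl a, Sum.inr i => (a = x ∧ (i : ℕ) = 0) ∨ (a = y ∧ (i : ℕ) = m - 1)
    | Sum.inr i, Sum.inr j => (i : ℕ) + 1 = (j : ℕ)
    | Sum.inr _, Sum.inl _ => False)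

/-- The bags of the subdivided decomposition: old nodes keep their bags, and
the `i`-th subdivision node gets `(B x ∩ B y) ∪ {v_0,…,v_i} ∪ {u_i,…,u_{m-1}}`. -/
def subdividedBags {V W : Type*} (B : W → Set V) (x y : W) {m : ℕ}
    (u v : Fin m → V) : W ⊕ Fin m → Set V :=
  fun a =>
    match a with
    | Sum.inl w => B w
    | Sum.inr i => (B x ∩ B y) ∪ {p | ∃ j : Fin m, j ≤ i ∧ v j = p} ∪
        {p | ∃ j : Fin m, i ≤ j ∧ u j = p}

namespace SimpleGraph

variable {V V' : Type*}

theorem Reachable.map_of_adj {G : SimpleGraph V} {H : SimpleGraph V'} (f : V → V')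
    (hf : ∀ ⦃a b⦄, G.Adj a b → H.Reachable (f a) (f b)) {a b : V} (h : G.Reachable a b) :
    H.Reachable (f a) (f b) := by
  rw [reachable_iff_reflTransGen] at h ⊢
  exact h.lift' f fun c d hcd => (reachable_iff_reflTransGen _ _).mp (hf hcd)

theorem reachable_induce_of_chain {G : SimpleGraph V} {S : Set V} (f : ℕ → V) {i j : ℕ}
    (hij : i ≤ j) (hadj : ∀ k, i ≤ k → k < j → G.Adj (f k) (f (k + 1)))
    (hS : ∀ k, i ≤ k → k ≤ j → f k ∈ S) :
    (G.induce S).Reachable ⟨f i, hS i le_rfl hij⟩ ⟨f j, hS j hij le_rfl⟩ := by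
  induction j, hij using Nat.le_induction with
  | base => rfl
  | succ j hij ih =>
    have hstep : (G.induce S).Adj ⟨f j, hS j hij (by omega)⟩ ⟨f (j + 1), hS _ (by omega) le_rfl⟩ :=
      hadj j hij (by omega)
    exact (ih (fun k hik hkj => hadj k hik (by omega))
      (fun k hik hkj => hS k hik (by omega))).trans hstep.reachable

theorem isBridge_of_collapse {G : SimpleGraph V} {H : SimpleGraph V'} (f : V → V') {a b : V}
    (hH : H.IsBridge s(f a, f b))
    (hf : ∀ e ∈ G.edgeSet, e ≠ s(a, b) → e.map f ∈ H.edgeSet \ {s(f a, f b)} ∨ (e.map f).IsDiag) :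
    G.IsBridge s(a, b) := by
  rw [isBridge_iff] at hH ⊢
  refine fun hr => hH (hr.map_of_adj f fun c d hcd => ?_)
  rw [deleteEdges_adj, Set.mem_singleton_iff] at hcd
  rcases hf s(c, d) hcd.1 hcd.2 with h | h
  · exact Adj.reachable (by simpa using h)
  · rw [Sym2.map_mk, Sym2.mk_isDiag_iff] at h
    rw [h]

end SimpleGraph

section Subdivision

variable {W : Type*} {x y : W} {m : ℕ}

/-- The `k`-th node of the path `x, z_0, …, z_{m-1}, y` (and `y` for every `k > m`). -/
def subdivisionPath (x y : W) (m : ℕ) : ℕ → W ⊕ Fin m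
  | 0 => .inl x
  | k + 1 => if h : k < m then .inr ⟨k, h⟩ else .inl y

/-- Collapses the subdivided path onto the edge `{x,y}`: the path nodes up to position `c` go to
`x`, the later ones to `y`. -/
def collapseSubdivision (x y : W) (m c : ℕ) : W ⊕ Fin m → W :=
  Sum.elim id fun i => if (i : ℕ) < c then x else y

@[simp] theorem subdivisionPath_zero : subdivisionPath x y m 0 = .inl x := rfl

theorem subdivisionPath_of_lt {k : ℕ} (hk : m < k) : subdivisionPath x y m k = .inl y := by
  obtain ⟨k, rfl⟩ : ∃ j, k = j + 1 := ⟨k - 1, by omega⟩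
  simp [subdivisionPath, show ¬ k < m by omega]

theorem subdivisionPath_succ (i : Fin m) : subdivisionPath x y m (i + 1) = .inr i := by
  simp [subdivisionPath]

theorem collapseSubdivision_subdivisionPath {c k : ℕ} (hc : c ≤ m) :
    collapseSubdivision x y m c (subdivisionPath x y m k) = if k ≤ c then x else y := by
  cases k with
  | zero => simp [subdivisionPath, collapseSubdivision]
  | succ k =>
    by_cases hk : k < m
    · simp [subdivisionPath, collapseSubdivision, hk]
    · simp [subdivisionPath, collapseSubdivision, hk, show ¬ k + 1 ≤ c by omega]

theorem collapseSubdivision_map_pathEdge_self {c : ℕ} (hc : c ≤ m) :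
    s(subdivisionPath x y m c, subdivisionPath x y m (c + 1)).map (collapseSubdivision x y m c) =
      s(x, y) := by
  simp [collapseSubdivision_subdivisionPath hc]

theorem isDiag_collapseSubdivision_map_pathEdge {c c' : ℕ} (hc : c ≤ m) (hne : c' ≠ c) :
    (s(subdivisionPath x y m c', subdivisionPath x y m (c' + 1)).map
      (collapseSubdivision x y m c)).IsDiag := by
  simp only [Sym2.map_mk, Sym2.mk_isDiag_iff, collapseSubdivision_subdivisionPath hc]
  split_ifs <;> first | rfl | omega

variable {V : Type*} {B : W → Set V} {u v : Fin m → V}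

theorem inter_subset_subdividedBags_subdivisionPath (k : ℕ) :
    B x ∩ B y ⊆ subdividedBags B x y u v (subdivisionPath x y m k) := by
  rcases k with _ | k
  · exact Set.inter_subset_left
  · rw [subdivisionPath]
    split_ifs
    exacts [fun p hp => .inl (.inl hp), Set.inter_subset_right]

theorem mem_subdividedBags_subdivisionPath_of_succ_le (hv : ∀ i, v i ∈ B y) (j : Fin m) {k : ℕ}
    (hk : (j : ℕ) + 1 ≤ k) : v j ∈ subdividedBags B x y u v (subdivisionPath x y m k) := by
  obtain ⟨k, rfl⟩ : ∃ l, k = l + 1 := ⟨k - 1, by omega⟩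
  rw [subdivisionPath]
  split_ifs
  exacts [.inl (.inr ⟨j, Fin.le_def.mpr (show (j : ℕ) ≤ k by omega), rfl⟩), hv j]

theorem mem_subdividedBags_subdivisionPath_of_le_succ (hu : ∀ i, u i ∈ B x) (j : Fin m) {k : ℕ}
    (hk : k ≤ (j : ℕ) + 1) : u j ∈ subdividedBags B x y u v (subdivisionPath x y m k) := by
  rcases k with _ | k
  · exact hu j
  · rw [subdivisionPath, dif_pos (by omega)]
    exact .inr ⟨j, Fin.le_def.mpr (show k ≤ (j : ℕ) by omega), rfl⟩

variable [DecidableEq W] {T : SimpleGraph W}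

theorem subdividedTree_adj_inl {a b : W} (hab : T.Adj a b) (hne : s(a, b) ≠ s(x, y)) :
    (subdividedTree T x y m).Adj (.inl a) (.inl b) := by
  rw [subdividedTree, SimpleGraph.fromRel_adj]
  exact ⟨by simpa using hab.ne, .inl ⟨hab, .inl hne⟩⟩

theorem subdividedTree_adj_subdivisionPath (hxy : T.Adj x y) {c : ℕ} (hc : c ≤ m) :
    (subdividedTree T x y m).Adj (subdivisionPath x y m c) (subdivisionPath x y m (c + 1)) := by
  rcases c with _ | c
  · by_cases hm : 0 < m
    · simp [subdivisionPath, subdividedTree, hm]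
    · simp [subdivisionPath, subdividedTree, show m = 0 by omega, hxy, hxy.ne]
  · by_cases hc' : c + 1 < m
    · simp [subdivisionPath, subdividedTree, hc', show c < m by omega]
    · simp [subdivisionPath, subdividedTree, hc', show c < m by omega]
      omega

theorem mem_edgeSet_subdividedTree {e : Sym2 (W ⊕ Fin m)}
    (he : e ∈ (subdividedTree T x y m).edgeSet) :
    (∃ a b, T.Adj a b ∧ s(a, b) ≠ s(x, y) ∧ e = s(.inl a, .inl b)) ∨
      ∃ c ≤ m, e = s(subdivisionPath x y m c, subdivisionPath x y m (c + 1)) := by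
  induction e using Sym2.ind with | h p q => ?_
  rw [SimpleGraph.mem_edgeSet, subdividedTree, SimpleGraph.fromRel_adj] at he
  rcases p with a | i <;> rcases q with b | j <;> simp only [or_false, false_or] at he
  · have hab : T.Adj a b := by rcases he.2 with h | h; exacts [h.1, h.1.symm]
    by_cases hne : s(a, b) = s(x, y)
    · have hm : m = 0 := by
        rcases he.2 with h | h
        · exact h.2.resolve_left (not_not.mpr hne)
        · exact h.2.resolve_left (not_not.mpr (Sym2.eq_swap.trans hne))
      refine .inr ⟨0, by omega, ?_⟩
      rw [subdivisionPath_zero, subdivisionPath_of_lt (by omega)]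
      rcases Sym2.eq_iff.mp hne with ⟨rfl, rfl⟩ | ⟨rfl, rfl⟩
      exacts [rfl, Sym2.eq_swap]
    · exact .inl ⟨a, b, hab, hne, rfl⟩
  · rcases he.2 with ⟨rfl, hj⟩ | ⟨rfl, hj⟩
    · refine .inr ⟨0, by omega, ?_⟩
      rw [subdivisionPath_zero, show 0 + 1 = (j : ℕ) + 1 by omega, subdivisionPath_succ]
    · refine .inr ⟨j + 1, by omega, ?_⟩
      rw [subdivisionPath_succ, subdivisionPath_of_lt (by omega), Sym2.eq_swap]
  · rcases he.2 with ⟨rfl, hi⟩ | ⟨rfl, hi⟩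
    · refine .inr ⟨0, by omega, ?_⟩
      rw [subdivisionPath_zero, show 0 + 1 = (i : ℕ) + 1 by omega, subdivisionPath_succ,
        Sym2.eq_swap]
    · refine .inr ⟨i + 1, by omega, ?_⟩
      rw [subdivisionPath_succ, subdivisionPath_of_lt (by omega)]
  · rcases he.2 with hij | hji
    · refine .inr ⟨i + 1, by omega, ?_⟩
      rw [subdivisionPath_succ, show (i : ℕ) + 1 + 1 = j + 1 by omega, subdivisionPath_succ]
    · refine .inr ⟨j + 1, by omega, ?_⟩
      rw [subdivisionPath_succ, show (j : ℕ) + 1 + 1 = i + 1 by omega, subdivisionPath_succ,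
        Sym2.eq_swap]

theorem subdividedTree_isAcyclic (hT : T.IsAcyclic) (hxy : T.Adj x y) :
    (subdividedTree T x y m).IsAcyclic := by
  have hbridge := SimpleGraph.isAcyclic_iff_forall_adj_isBridge.mp hT
  rw [SimpleGraph.isAcyclic_iff_forall_isBridge]
  intro e he
  rcases mem_edgeSet_subdividedTree he with ⟨a, b, hab, hne, rfl⟩ | ⟨c, hc, rfl⟩
  · refine SimpleGraph.isBridge_of_collapse (collapseSubdivision x y m 0) (hbridge hab) ?_
    intro e' he' hne'
    rcases mem_edgeSet_subdividedTree he' with ⟨a', b', hab', -, rfl⟩ | ⟨c', hc', rfl⟩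
    · refine .inl ⟨hab', fun h => hne' ?_⟩
      simp only [Set.mem_singleton_iff, Sym2.map_mk, collapseSubdivision, Sum.elim_inl, id] at h
      simpa using congrArg (Sym2.map (Sum.inl : W → W ⊕ Fin m)) h
    · rcases eq_or_ne c' 0 with rfl | hc'0
      · rw [collapseSubdivision_map_pathEdge_self (Nat.zero_le m)]
        exact .inl ⟨hxy, fun h => hne (Eq.symm (by simpa [collapseSubdivision] using h))⟩
      · exact .inr (isDiag_collapseSubdivision_map_pathEdge (Nat.zero_le m) hc'0)
  · have hxy' : T.IsBridge s(collapseSubdivision x y m c (subdivisionPath x y m c),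
        collapseSubdivision x y m c (subdivisionPath x y m (c + 1))) := by
      rw [← Sym2.map_mk, collapseSubdivision_map_pathEdge_self hc]
      exact hbridge hxy
    refine SimpleGraph.isBridge_of_collapse (collapseSubdivision x y m c) hxy' ?_
    intro e' he' hne'
    rcases mem_edgeSet_subdividedTree he' with ⟨a', b', hab', hne'', rfl⟩ | ⟨c', hc', rfl⟩
    · refine .inl ⟨hab', ?_⟩
      rw [← Sym2.map_mk, collapseSubdivision_map_pathEdge_self hc]
      simpa [collapseSubdivision] using hne''
    · exact .inr (isDiag_collapseSubdivision_map_pathEdge hc fun h => hne' (h ▸ rfl))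

theorem subdividedTree_induce_connected (hxy : T.Adj x y) (S : Set (W ⊕ Fin m))
    (hT : (T.induce (Sum.inl ⁻¹' S)).Connected)
    (hpath : Sum.inl x ∈ S → Sum.inl y ∈ S → ∀ k, subdivisionPath x y m k ∈ S)
    (hsub : ∀ i : Fin m, Sum.inr i ∈ S →
      (∀ k ≤ (i : ℕ) + 1, subdivisionPath x y m k ∈ S) ∨
        ∀ k ≥ (i : ℕ) + 1, subdivisionPath x y m k ∈ S) :
    ((subdividedTree T x y m).induce S).Connected := by
  set N := subdividedTree T x y m
  have hchain : ∀ ⦃i j⦄ (hij : i ≤ j), j ≤ m + 1 →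
      ∀ hS : ∀ k, i ≤ k → k ≤ j → subdivisionPath x y m k ∈ S,
      (N.induce S).Reachable ⟨_, hS i le_rfl hij⟩ ⟨_, hS j hij le_rfl⟩ :=
    fun i j hij hjm hS => SimpleGraph.reachable_induce_of_chain _ hij
      (fun k _ hk => subdividedTree_adj_subdivisionPath hxy (c := k) (by omega)) hS
  have hends : ∀ (hx : Sum.inl x ∈ S) (hy : Sum.inl y ∈ S),
      (N.induce S).Reachable ⟨_, hx⟩ ⟨_, hy⟩ := by
    intro hx hy
    convert hchain (Nat.zero_le (m + 1)) le_rfl fun k _ _ => hpath hx hy k using 2 <;>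
      simp [subdivisionPath_of_lt]
  have hinl : ∀ a b (ha : Sum.inl a ∈ S) (hb : Sum.inl b ∈ S),
      (N.induce S).Reachable ⟨_, ha⟩ ⟨_, hb⟩ := by
    intro a b ha hb
    refine (hT.preconnected ⟨a, ha⟩ ⟨b, hb⟩).map_of_adj (H := N.induce S)
      (fun w => (⟨Sum.inl w.1, w.2⟩ : S)) ?_
    rintro ⟨c, hc⟩ ⟨d, hd⟩ (hcd : T.Adj c d)
    by_cases hne : s(c, d) = s(x, y)
    · rcases Sym2.eq_iff.mp hne with ⟨rfl, rfl⟩ | ⟨rfl, rfl⟩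
      exacts [hends hc hd, (hends hd hc).symm]
    · exact SimpleGraph.Adj.reachable (subdividedTree_adj_inl hcd hne)
  have hinr : ∀ i (hi : Sum.inr i ∈ S), ∃ t, ∃ ht : Sum.inl t ∈ S,
      (N.induce S).Reachable ⟨_, hi⟩ ⟨_, ht⟩ := by
    intro i hi
    rcases hsub i hi with h | h
    · refine ⟨x, h 0 (Nat.zero_le _), ?_⟩
      convert (hchain (Nat.zero_le (i + 1)) (by omega) fun k _ hk => h k hk).symm using 2 <;>
        simp [subdivisionPath_succ]
    · refine ⟨y, subdivisionPath_of_lt (Nat.lt_succ_self m) ▸ h (m + 1) (by omega), ?_⟩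
      convert hchain (by omega : (i : ℕ) + 1 ≤ m + 1) le_rfl (fun k hk _ => h k hk) using 2 <;>
        simp [subdivisionPath_succ, subdivisionPath_of_lt]
  obtain ⟨⟨w, hw⟩⟩ := hT.nonempty
  refine (SimpleGraph.connected_iff_exists_forall_reachable _).mpr ⟨⟨_, hw⟩, ?_⟩
  rintro ⟨a | i, ha⟩
  · exact hinl w a hw ha
  · obtain ⟨t, ht, hit⟩ := hinr i ha
    exact (hinl w t hw ht).trans hit.symm

theorem subdividedTree_isTree (hT : T.IsTree) (hxy : T.Adj x y) :
    (subdividedTree T x y m).IsTree := by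
  have hT' : (T.induce (Sum.inl ⁻¹' (Set.univ : Set (W ⊕ Fin m)))).Connected := by
    rw [Set.preimage_univ]
    exact (SimpleGraph.induceUnivIso T).connected_iff.mpr hT.connected
  refine ⟨?_, subdividedTree_isAcyclic hT.isAcyclic hxy⟩
  exact (SimpleGraph.induceUnivIso _).connected_iff.mp <| subdividedTree_induce_connected hxy
    Set.univ hT' (fun _ _ _ => trivial) fun _ _ => .inl fun _ _ => trivial

theorem subdividedBags_coherent (hxy : T.Adj x y) (hu : ∀ i, u i ∈ B x) (hv : ∀ i, v i ∈ B y)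
    {p : V} (hB : (T.induce {w | p ∈ B w}).Connected) :
    ((subdividedTree T x y m).induce {a | p ∈ subdividedBags B x y u v a}).Connected := by
  refine subdividedTree_induce_connected hxy _ hB
    (fun hx hy k => inter_subset_subdividedBags_subdivisionPath k ⟨hx, hy⟩) ?_
  rintro i ((hpxy | ⟨j, hji, rfl⟩) | ⟨j, hij, rfl⟩)
  · exact .inl fun k _ => inter_subset_subdividedBags_subdivisionPath k hpxy
  · exact .inr fun k hk => mem_subdividedBags_subdivisionPath_of_succ_le hv j (by omega)
  · exact .inl fun k hk => mem_subdividedBags_subdivisionPath_of_le_succ hu j (by omega)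

end Subdivision

theorem treeDecomp_subdivide_general {V W : Type*} [DecidableEq W] (G : SimpleGraph V)
    (T : SimpleGraph W) (B : W → Set V) (td : TreeDecomp G T B)
    (x y : W) (hxy : T.Adj x y) (m : ℕ) (u v : Fin m → V)
    (hu : ∀ i, u i ∈ B x) (hv : ∀ i, v i ∈ B y) :
    TreeDecomp G (subdividedTree T x y m) (subdividedBags B x y u v) ∧
      ∀ i : Fin m, u i ∈ subdividedBags B x y u v (Sum.inr i) ∧
        v i ∈ subdividedBags B x y u v (Sum.inr i) := by
  refine ⟨⟨subdividedTree_isTree td.tree hxy, fun p => ?_, fun p q hpq => ?_,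
    fun p => subdividedBags_coherent hxy hu hv (td.coherent p)⟩,
    fun i => ⟨.inr ⟨i, le_rfl, rfl⟩, .inl (.inr ⟨i, le_rfl, rfl⟩)⟩⟩
  · obtain ⟨w, hw⟩ := td.vertexCover p
    exact ⟨.inl w, hw⟩
  · obtain ⟨w, hw⟩ := td.edgeCover hpq
    exact ⟨.inl w, hw⟩

/-- Subdividing an edge `{x,y}` of a tree decomposition of `G` by a path of new
nodes `z_0, …, z_{m-1}` with bags `B(z_i) = (B x ∩ B y) ∪ {v_0,…,v_i,u_i,…,u_{m-1}}`,
where `{u_i, v_i}` are edges of `G` with `u_i ∈ B x` and `v_i ∈ B y`, yields again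
a tree decomposition of `G`, and every edge `{u_i, v_i}` is covered by the bag of `z_i`. -/
theorem treeDecomp_subdivide {V W : Type*} [DecidableEq W] (G : SimpleGraph V)
    (T : SimpleGraph W) (B : W → Set V) (td : TreeDecomp G T B)
    (x y : W) (hxy : T.Adj x y) (m : ℕ) (u v : Fin m → V)
    (hedge : ∀ i, G.Adj (u i) (v i)) (hu : ∀ i, u i ∈ B x) (hv : ∀ i, v i ∈ B y) :
    TreeDecomp G (subdividedTree T x y m) (subdividedBags B x y u v) ∧
      ∀ i : Fin m, u i ∈ subdividedBags B x y u v (Sum.inr i) ∧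
        v i ∈ subdividedBags B x y u v (Sum.inr i) :=
  treeDecomp_subdivide_general G T B td x y hxy m u v hu hv
end
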